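/- arXiv:0707.3911 — 10 statements merged into one kernel-verified Lean document; each statement's English description precedes it below -/
import Mathlib

section
/- Let a, b, c be real numbers with a > 0 and 4ac − b² > 0, and set D = (3a+c)(a+3c) − b², a₁ = a·((a+3c)² − 3b²)/D, b₁ = b·(3(a−c)² − b²)/D, c₁ = c·((3a+c)² − 3b²)/D. Then the integral over ℝ of 1/(a₁x² + b₁x + c₁) dx equals the integral over ℝ of 1/(ax² + bx + c) dx. -/
/-!
Completing the square and the substitution `y = (2a x + b)/√(4ac - b²)` give
`∫ 1/(ax² + bx + c) = 2π/√(4ac - b²)` for every positive definite quadratic, so the integral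
depends only on the discriminant. The Landen map preserves positivity of the leading
coefficient and, by a polynomial identity, the discriminant itself.
-/

open Real MeasureTheory

-- At `p = 0` both sides are junk `0`: a nonzero constant is not integrable on `ℝ`.
theorem integral_inv_one_add_sq_mul_add (p q : ℝ) :
    ∫ x : ℝ, (1 + (p * x + q) ^ 2)⁻¹ = π / |p| := by
  calc ∫ x : ℝ, (1 + (p * x + q) ^ 2)⁻¹
      = |p⁻¹| • ∫ y : ℝ, (1 + (y + q) ^ 2)⁻¹ :=
        Measure.integral_comp_mul_left (fun y ↦ (1 + (y + q) ^ 2)⁻¹) p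
    _ = |p⁻¹| • ∫ y : ℝ, (1 + y ^ 2)⁻¹ := by
        rw [integral_add_right_eq_self (fun y ↦ (1 + y ^ 2)⁻¹) q]
    _ = π / |p| := by rw [integral_univ_inv_one_add_sq, smul_eq_mul, abs_inv, inv_mul_eq_div]

theorem quadratic_eq_mul_one_add_sq {a b c s : ℝ} (ha : a ≠ 0) (hs : s ≠ 0)
    (hs2 : s ^ 2 = 4 * a * c - b ^ 2) (x : ℝ) :
    a * x ^ 2 + b * x + c = s ^ 2 / (4 * a) * (1 + (2 * a / s * x + b / s) ^ 2) := by
  field_simp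
  linear_combination (-1) * hs2

theorem integral_one_div_quadratic {a b c : ℝ} (ha : 0 < a) (hdisc : 0 < 4 * a * c - b ^ 2) :
    ∫ x : ℝ, 1 / (a * x ^ 2 + b * x + c) = 2 * π / √(4 * a * c - b ^ 2) := by
  set s := √(4 * a * c - b ^ 2)
  have hs : 0 < s := sqrt_pos.2 hdisc
  have hs2 : s ^ 2 = 4 * a * c - b ^ 2 := sq_sqrt hdisc.le
  have hp : 0 < 2 * a / s := by positivity
  simp_rw [quadratic_eq_mul_one_add_sq ha.ne' hs.ne' hs2, one_div, mul_inv, inv_div]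
  rw [integral_const_mul, integral_inv_one_add_sq_mul_add, abs_of_pos hp]
  field_simp
  ring

theorem landen_discrim_eq {a b c D : ℝ} (hDdef : D = (3 * a + c) * (a + 3 * c) - b ^ 2)
    (hD : D ≠ 0) :
    4 * (a * ((a + 3 * c) ^ 2 - 3 * b ^ 2) / D) * (c * ((3 * a + c) ^ 2 - 3 * b ^ 2) / D)
      - (b * (3 * (a - c) ^ 2 - b ^ 2) / D) ^ 2 = 4 * a * c - b ^ 2 := by
  field_simp
  rw [hDdef]
  ring

theorem landen_invariance (a b c : ℝ) (ha : 0 < a) (hD : 0 < 4 * a * c - b ^ 2)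
    (D a₁ b₁ c₁ : ℝ)
    (hDdef : D = (3 * a + c) * (a + 3 * c) - b ^ 2)
    (ha₁ : a₁ = a * ((a + 3 * c) ^ 2 - 3 * b ^ 2) / D)
    (hb₁ : b₁ = b * (3 * (a - c) ^ 2 - b ^ 2) / D)
    (hc₁ : c₁ = c * ((3 * a + c) ^ 2 - 3 * b ^ 2) / D) :
    ∫ x : ℝ, 1 / (a₁ * x ^ 2 + b₁ * x + c₁) = ∫ x : ℝ, 1 / (a * x ^ 2 + b * x + c) := by
  subst ha₁ hb₁ hc₁
  have hc : 0 < c := by nlinarith [sq_nonneg b]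
  have hDpos : 0 < D := by rw [hDdef]; nlinarith [sq_nonneg (a - c)]
  have ha₁ : 0 < a * ((a + 3 * c) ^ 2 - 3 * b ^ 2) / D := by
    have : 0 < (a + 3 * c) ^ 2 - 3 * b ^ 2 := by nlinarith [sq_nonneg (a - 3 * c)]
    positivity
  have hdisc := landen_discrim_eq hDdef hDpos.ne'
  rw [integral_one_div_quadratic ha hD, integral_one_div_quadratic ha₁ (hdisc ▸ hD), hdisc]
end

section
/- Let a, b, c be real numbers with D = (3a+c)(a+3c) − b² ≠ 0, and set a₁ = a·((a+3c)² − 3b²)/D, b₁ = b·(3(a−c)² − b²)/D, c₁ = c·((3a+c)² − 3b²)/D. Then 4a₁c₁ − b₁² = 4ac − b²; that is, the discriminant of the quadratic is preserved by the rational Landen transformation. -/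
theorem landen_discriminant_mul_sq {R : Type*} [CommRing R] (a b c : R) :
    4 * (a * ((a + 3 * c) ^ 2 - 3 * b ^ 2)) * (c * ((3 * a + c) ^ 2 - 3 * b ^ 2))
        - (b * (3 * (a - c) ^ 2 - b ^ 2)) ^ 2
      = (4 * a * c - b ^ 2) * ((3 * a + c) * (a + 3 * c) - b ^ 2) ^ 2 := by
  ring

theorem landen_discriminant_invariance (a b c : ℝ)
    (D : ℝ) (hDdef : D = (3 * a + c) * (a + 3 * c) - b ^ 2) (hD : D ≠ 0)
    (a₁ b₁ c₁ : ℝ)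
    (ha₁ : a₁ = a * ((a + 3 * c) ^ 2 - 3 * b ^ 2) / D)
    (hb₁ : b₁ = b * (3 * (a - c) ^ 2 - b ^ 2) / D)
    (hc₁ : c₁ = c * ((3 * a + c) ^ 2 - 3 * b ^ 2) / D) :
    4 * a₁ * c₁ - b₁ ^ 2 = 4 * a * c - b ^ 2 := by
  have hD2 : D ^ 2 ≠ 0 := pow_ne_zero 2 hD
  calc 4 * a₁ * c₁ - b₁ ^ 2
      = (4 * (a * ((a + 3 * c) ^ 2 - 3 * b ^ 2)) * (c * ((3 * a + c) ^ 2 - 3 * b ^ 2))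
          - (b * (3 * (a - c) ^ 2 - b ^ 2)) ^ 2) / D ^ 2 := by
        rw [ha₁, hb₁, hc₁]; field_simp
    _ = 4 * a * c - b ^ 2 := by
        rw [landen_discriminant_mul_sq, ← hDdef, mul_div_cancel_right₀ _ hD2]
end

section
/- Let a, b, c be real numbers with a > 0 and 4ac − b² > 0. Define sequences by a₀ = a, b₀ = b, c₀ = c and, for each n, Dₙ = (3aₙ+cₙ)(aₙ+3cₙ) − bₙ², a_{n+1} = aₙ·((aₙ+3cₙ)² − 3bₙ²)/Dₙ, b_{n+1} = bₙ·(3(aₙ−cₙ)² − bₙ²)/Dₙ, c_{n+1} = cₙ·((3aₙ+cₙ)² − 3bₙ²)/Dₙ. Then aₙ → (1/2)√(4ac − b²), cₙ → (1/2)√(4ac − b²), and bₙ → 0 as n → ∞. -/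
/-!
Write `Δ = 4ac - b²` and `E = (a - c)² + b²`, so that `(a + c)² = Δ + E` and the Landen
denominator is `D = 4Δ + 3E`. One step preserves `Δ` and sends `E` to `E³ / D² ≤ E / 9`,
while `a + c` stays positive. Hence `E → 0`, so `a - c → 0`, `b → 0` and
`a + c = √(Δ + E) → √Δ`.
-/

open Filter Real Topology

namespace Landen

def denom (p : ℝ × ℝ × ℝ) : ℝ := (3 * p.1 + p.2.2) * (p.1 + 3 * p.2.2) - p.2.1 ^ 2

noncomputable def step (p : ℝ × ℝ × ℝ) : ℝ × ℝ × ℝ :=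
  (p.1 * ((p.1 + 3 * p.2.2) ^ 2 - 3 * p.2.1 ^ 2) / denom p,
    p.2.1 * (3 * (p.1 - p.2.2) ^ 2 - p.2.1 ^ 2) / denom p,
    p.2.2 * ((3 * p.1 + p.2.2) ^ 2 - 3 * p.2.1 ^ 2) / denom p)

def disc (p : ℝ × ℝ × ℝ) : ℝ := 4 * p.1 * p.2.2 - p.2.1 ^ 2

def defect (p : ℝ × ℝ × ℝ) : ℝ := (p.1 - p.2.2) ^ 2 + p.2.1 ^ 2

lemma defect_nonneg (p : ℝ × ℝ × ℝ) : 0 ≤ defect p := by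
  unfold defect; positivity

lemma denom_eq (p : ℝ × ℝ × ℝ) : denom p = 4 * disc p + 3 * defect p := by
  unfold denom disc defect; ring

lemma sq_fst_add_eq (p : ℝ × ℝ × ℝ) : (p.1 + p.2.2) ^ 2 = disc p + defect p := by
  unfold disc defect; ring

lemma abs_fst_sub_le_sqrt_defect (p : ℝ × ℝ × ℝ) : |p.1 - p.2.2| ≤ √(defect p) :=
  abs_le_sqrt (by unfold defect; nlinarith [sq_nonneg p.2.1])

lemma abs_snd_le_sqrt_defect (p : ℝ × ℝ × ℝ) : |p.2.1| ≤ √(defect p) :=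
  abs_le_sqrt (by unfold defect; nlinarith [sq_nonneg (p.1 - p.2.2)])

lemma denom_pos {p : ℝ × ℝ × ℝ} (hp : 0 < disc p) : 0 < denom p := by
  rw [denom_eq]; linarith [defect_nonneg p]

section Step

variable {p : ℝ × ℝ × ℝ}

lemma disc_step (hD : denom p ≠ 0) : disc (step p) = disc p := by
  simp only [disc, step]
  field_simp
  unfold denom
  ring

lemma defect_step (hD : denom p ≠ 0) : defect (step p) = defect p ^ 3 / denom p ^ 2 := by
  simp only [defect, step]
  field_simp
  ring

lemma fst_add_step (hD : denom p ≠ 0) :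
    (step p).1 + (step p).2.2 = (p.1 + p.2.2) * ((p.1 + p.2.2) ^ 2 + 3 * disc p) / denom p := by
  simp only [disc, step]
  field_simp
  ring

variable (hp : 0 < disc p)
include hp

lemma defect_step_le : defect (step p) ≤ defect p / 9 := by
  have hE := defect_nonneg p
  rw [defect_step (denom_pos hp).ne', denom_eq, div_le_div_iff₀ (by positivity) (by norm_num)]
  -- reduces to `9E² ≤ (4Δ + 3E)²`, true as `Δ > 0`
  nlinarith [mul_nonneg (mul_nonneg hp.le hp.le) hE, mul_nonneg (mul_nonneg hp.le hE) hE]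

lemma fst_add_step_pos (hs : 0 < p.1 + p.2.2) : 0 < (step p).1 + (step p).2.2 := by
  rw [fst_add_step (denom_pos hp).ne']
  have := denom_pos hp
  positivity

end Step

section Orbit

variable {p : ℕ → ℝ × ℝ × ℝ} (hstep : ∀ n, p (n + 1) = step (p n)) (hp : 0 < disc (p 0))
include hstep hp

lemma disc_orbit (n : ℕ) : disc (p n) = disc (p 0) := by
  induction n with
  | zero => rfl
  | succ n ih => rw [hstep, disc_step (denom_pos (ih ▸ hp)).ne', ih]

lemma defect_orbit_le (n : ℕ) : defect (p n) ≤ defect (p 0) * (1 / 9) ^ n := by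
  induction n with
  | zero => simp
  | succ n ih =>
    rw [hstep]
    have := defect_step_le ((disc_orbit hstep hp n).symm ▸ hp)
    rw [pow_succ]
    linarith

lemma tendsto_defect_orbit : Tendsto (fun n ↦ defect (p n)) atTop (𝓝 0) := by
  have hgeom : Tendsto (fun n : ℕ ↦ defect (p 0) * (1 / 9) ^ n) atTop (𝓝 0) := by
    simpa using (tendsto_pow_atTop_nhds_zero_of_lt_one (by norm_num : (0 : ℝ) ≤ 1 / 9)
      (by norm_num)).const_mul (defect (p 0))
  exact squeeze_zero (fun n ↦ defect_nonneg _) (defect_orbit_le hstep hp) hgeom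

lemma tendsto_sqrt_defect_orbit : Tendsto (fun n ↦ √(defect (p n))) atTop (𝓝 0) := by
  simpa using (tendsto_defect_orbit hstep hp).sqrt

lemma fst_add_orbit_pos (hs : 0 < (p 0).1 + (p 0).2.2) (n : ℕ) : 0 < (p n).1 + (p n).2.2 := by
  induction n with
  | zero => exact hs
  | succ n ih => rw [hstep]; exact fst_add_step_pos ((disc_orbit hstep hp n).symm ▸ hp) ih

lemma tendsto_fst_add_orbit (hs : 0 < (p 0).1 + (p 0).2.2) :
    Tendsto (fun n ↦ (p n).1 + (p n).2.2) atTop (𝓝 √(disc (p 0))) := by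
  have hsum (n : ℕ) : (p n).1 + (p n).2.2 = √(disc (p 0) + defect (p n)) := by
    rw [← disc_orbit hstep hp n, ← sq_fst_add_eq,
      sqrt_sq (fst_add_orbit_pos hstep hp hs n).le]
  simp_rw [hsum]
  simpa using (tendsto_const_nhds.add (tendsto_defect_orbit hstep hp)).sqrt

theorem tendsto_orbit (hs : 0 < (p 0).1 + (p 0).2.2) :
    Tendsto p atTop (𝓝 (√(disc (p 0)) / 2, 0, √(disc (p 0)) / 2)) := by
  have hsqrt := tendsto_sqrt_defect_orbit hstep hp
  have hsum := tendsto_fst_add_orbit hstep hp hs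
  have hdiff : Tendsto (fun n ↦ (p n).1 - (p n).2.2) atTop (𝓝 0) :=
    squeeze_zero_norm (fun n ↦ abs_fst_sub_le_sqrt_defect (p n)) hsqrt
  have hmid : Tendsto (fun n ↦ (p n).2.1) atTop (𝓝 0) :=
    squeeze_zero_norm (fun n ↦ abs_snd_le_sqrt_defect (p n)) hsqrt
  have hfst := (hsum.add hdiff).div_const 2
  have hlst := (hsum.sub hdiff).div_const 2
  simp only [add_zero, sub_zero, add_add_sub_cancel, add_sub_sub_cancel] at hfst hlst
  refine Tendsto.prodMk_nhds ?_ (hmid.prodMk_nhds ?_)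
  · simpa [← two_mul] using hfst
  · simpa [← two_mul] using hlst

end Orbit

end Landen

theorem landen_convergence (a b c : ℝ) (ha : 0 < a) (hD : 0 < 4 * a * c - b ^ 2)
    (A B C : ℕ → ℝ) (hA0 : A 0 = a) (hB0 : B 0 = b) (hC0 : C 0 = c)
    (hA : ∀ n, A (n + 1) = A n * ((A n + 3 * C n) ^ 2 - 3 * B n ^ 2) /
      ((3 * A n + C n) * (A n + 3 * C n) - B n ^ 2))
    (hB : ∀ n, B (n + 1) = B n * (3 * (A n - C n) ^ 2 - B n ^ 2) /
      ((3 * A n + C n) * (A n + 3 * C n) - B n ^ 2))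
    (hC : ∀ n, C (n + 1) = C n * ((3 * A n + C n) ^ 2 - 3 * B n ^ 2) /
      ((3 * A n + C n) * (A n + 3 * C n) - B n ^ 2)) :
    Tendsto A atTop (nhds ((1 / 2) * Real.sqrt (4 * a * c - b ^ 2))) ∧
    Tendsto C atTop (nhds ((1 / 2) * Real.sqrt (4 * a * c - b ^ 2))) ∧
    Tendsto B atTop (nhds 0) := by
  have hc : 0 < c := by nlinarith [sq_nonneg b]
  have hstep (n : ℕ) : (A (n + 1), B (n + 1), C (n + 1)) = Landen.step (A n, B n, C n) := by
    simp only [Landen.step, Landen.denom, hA, hB, hC]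
  have hlim := Landen.tendsto_orbit (p := fun n ↦ (A n, B n, C n)) hstep
    (by simpa [Landen.disc, hA0, hB0, hC0] using hD) (by simp only [hA0, hC0]; linarith)
  simp only [Landen.disc, hA0, hB0, hC0] at hlim
  simp only [one_div_mul_eq_div]
  exact ⟨hlim.fst_nhds, hlim.snd_nhds.snd_nhds, hlim.snd_nhds.fst_nhds⟩
end

section
/- Let a, b, c be real numbers with a > 0 and 4ac − b² > 0, let (aₙ, bₙ, cₙ) be the iterates of the rational Landen transformation starting from (a,b,c), and set eₙ = (aₙ − (1/2)√(4ac−b²), bₙ, cₙ − (1/2)√(4ac−b²)) ∈ ℝ³. Then the convergence is cubic: there exists a constant C > 0 such that ‖e_{n+1}‖ ≤ C‖eₙ‖³ for all n. -/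
/-!
The discriminant `4ac - b²` is invariant under the Landen map, so with `l = √(4ac - b²) / 2`
every iterate stays on the quadric `4ac - b² = 4l²`, which contains the fixed point `(l, 0, l)`.
On that quadric the denominator equals `3(a + c)² + 4l² ≥ 4l²`, and the errors
`a₁ - l`, `b₁`, `c₁ - l` are cubic forms in `(a - l, b, c - l)` divided by it.
-/

open Real

theorem EuclideanSpace.norm_le_sum_norm {𝕜 ι : Type*} [RCLike 𝕜] [Fintype ι]
    (x : EuclideanSpace 𝕜 ι) : ‖x‖ ≤ ∑ i, ‖x i‖ := by
  rw [EuclideanSpace.norm_eq, Real.sqrt_le_left (by positivity)]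
  exact Finset.sum_sq_le_sq_sum_of_nonneg fun _ _ => norm_nonneg _

section Vec3

variable {v : EuclideanSpace ℝ (Fin 3)} {x y z : ℝ}

theorem norm_le_abs_add_abs_add_abs (hv : v.ofLp = ![x, y, z]) : ‖v‖ ≤ |x| + |y| + |z| := by
  simpa [Fin.sum_univ_three, hv] using EuclideanSpace.norm_le_sum_norm v

theorem abs_coords_le_norm (hv : v.ofLp = ![x, y, z]) :
    |x| ≤ ‖v‖ ∧ |y| ≤ ‖v‖ ∧ |z| ≤ ‖v‖ := by
  have h := PiLp.norm_apply_le v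
  exact ⟨by simpa [hv] using h 0, by simpa [hv] using h 1, by simpa [hv] using h 2⟩

end Vec3

noncomputable section

def landenDenom (a b c : ℝ) : ℝ := (3 * a + c) * (a + 3 * c) - b ^ 2

def landenA (a b c : ℝ) : ℝ := a * ((a + 3 * c) ^ 2 - 3 * b ^ 2) / landenDenom a b c

def landenB (a b c : ℝ) : ℝ := b * (3 * (a - c) ^ 2 - b ^ 2) / landenDenom a b c

def landenC (a b c : ℝ) : ℝ := c * ((3 * a + c) ^ 2 - 3 * b ^ 2) / landenDenom a b c

end

section Landen

variable {a b c l m : ℝ}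

theorem landenDenom_eq (a b c : ℝ) :
    landenDenom a b c = 3 * (a + c) ^ 2 + (4 * a * c - b ^ 2) := by
  unfold landenDenom; ring

theorem landenDenom_comm (a b c : ℝ) : landenDenom c b a = landenDenom a b c := by
  unfold landenDenom; ring

theorem landenC_eq_landenA (a b c : ℝ) : landenC a b c = landenA c b a := by
  rw [landenA, landenDenom_comm, landenC]; ring

theorem landen_discr (hD : landenDenom a b c ≠ 0) :
    4 * landenA a b c * landenC a b c - landenB a b c ^ 2 = 4 * a * c - b ^ 2 := by
  unfold landenA landenB landenC
  field_simp
  unfold landenDenom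
  ring

theorem four_mul_sq_le_landenDenom (hdisc : 4 * a * c - b ^ 2 = 4 * l ^ 2) :
    4 * l ^ 2 ≤ landenDenom a b c := by
  rw [landenDenom_eq, hdisc]
  exact le_add_of_nonneg_left (by positivity)

theorem landenDenom_pos (hl : 0 < l) (hdisc : 4 * a * c - b ^ 2 = 4 * l ^ 2) :
    0 < landenDenom a b c :=
  lt_of_lt_of_le (by positivity) (four_mul_sq_le_landenDenom hdisc)

theorem landenA_sub_eq (hdisc : 4 * a * c - b ^ 2 = 4 * l ^ 2) (hD : landenDenom a b c ≠ 0) :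
    landenA a b c - l = ((a - l) ^ 3 + 3 * (a - l) * (c - l) ^ 2
      - 3 / 2 * ((a - l) - (c - l)) * b ^ 2) / landenDenom a b c := by
  rw [eq_div_iff hD, sub_mul, landenA, div_mul_cancel₀ _ hD, landenDenom]
  linear_combination (2 * l + 3 / 2 * ((a - l) + (c - l))) * hdisc

theorem abs_div_landenDenom_le (hl : 0 < l) (hdisc : 4 * a * c - b ^ 2 = 4 * l ^ 2)
    {N k : ℝ} (hN : |N| ≤ k) : |N / landenDenom a b c| ≤ k / (4 * l ^ 2) := by
  rw [abs_div, abs_of_pos (landenDenom_pos hl hdisc)]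
  exact div_le_div₀ ((abs_nonneg N).trans hN) hN (by positivity)
    (four_mul_sq_le_landenDenom hdisc)

end Landen

section CubicBounds

variable {x y z m : ℝ}

theorem abs_landenA_numerator_le (hx : |x| ≤ m) (hy : |y| ≤ m) (hz : |z| ≤ m) :
    |x ^ 3 + 3 * x * y ^ 2 - 3 / 2 * (x - y) * z ^ 2| ≤ 7 * m ^ 3 := by
  rw [abs_le] at *
  obtain ⟨hx₁, hx₂⟩ := hx
  obtain ⟨hy₁, hy₂⟩ := hy
  obtain ⟨hz₁, hz₂⟩ := hz
  have hm : 0 ≤ m := by linarith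
  constructor <;>
    nlinarith [mul_nonneg (sub_nonneg.mpr hx₂) (sub_nonneg.mpr hy₂),
      mul_nonneg (neg_le_iff_add_nonneg.mp hx₁) (neg_le_iff_add_nonneg.mp hy₁),
      mul_nonneg (sub_nonneg.mpr hx₂) (neg_le_iff_add_nonneg.mp hy₁),
      mul_nonneg (neg_le_iff_add_nonneg.mp hx₁) (sub_nonneg.mpr hy₂),
      mul_nonneg (sub_nonneg.mpr hz₂) (neg_le_iff_add_nonneg.mp hz₁),
      sq_nonneg z, sq_nonneg x, sq_nonneg y, sq_nonneg (x - y), sq_nonneg (x + y),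
      pow_nonneg hm 3]

theorem abs_landenB_numerator_le (hx : |x| ≤ m) (hy : |y| ≤ m) (hz : |z| ≤ m) :
    |z * (3 * (x - y) ^ 2 - z ^ 2)| ≤ 13 * m ^ 3 := by
  rw [abs_le] at *
  obtain ⟨hx₁, hx₂⟩ := hx
  obtain ⟨hy₁, hy₂⟩ := hy
  obtain ⟨hz₁, hz₂⟩ := hz
  have hm : 0 ≤ m := by linarith
  constructor <;>
    nlinarith [mul_nonneg (sub_nonneg.mpr hx₂) (sub_nonneg.mpr hy₂),
      mul_nonneg (neg_le_iff_add_nonneg.mp hx₁) (neg_le_iff_add_nonneg.mp hy₁),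
      mul_nonneg (sub_nonneg.mpr hx₂) (neg_le_iff_add_nonneg.mp hy₁),
      mul_nonneg (neg_le_iff_add_nonneg.mp hx₁) (sub_nonneg.mpr hy₂),
      mul_nonneg (sub_nonneg.mpr hz₂) (neg_le_iff_add_nonneg.mp hz₁),
      sq_nonneg (x - y), sq_nonneg z, pow_nonneg hm 3]

end CubicBounds

section LandenError

variable {a b c l m : ℝ}

theorem abs_landenA_sub_le (hl : 0 < l) (hdisc : 4 * a * c - b ^ 2 = 4 * l ^ 2)
    (ha : |a - l| ≤ m) (hb : |b| ≤ m) (hc : |c - l| ≤ m) :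
    |landenA a b c - l| ≤ 7 * m ^ 3 / (4 * l ^ 2) := by
  rw [landenA_sub_eq hdisc (landenDenom_pos hl hdisc).ne']
  exact abs_div_landenDenom_le hl hdisc (abs_landenA_numerator_le ha hc hb)

theorem abs_landenC_sub_le (hl : 0 < l) (hdisc : 4 * a * c - b ^ 2 = 4 * l ^ 2)
    (ha : |a - l| ≤ m) (hb : |b| ≤ m) (hc : |c - l| ≤ m) :
    |landenC a b c - l| ≤ 7 * m ^ 3 / (4 * l ^ 2) := by
  rw [landenC_eq_landenA]
  exact abs_landenA_sub_le hl (by linarith) hc hb ha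

theorem abs_landenB_le (hl : 0 < l) (hdisc : 4 * a * c - b ^ 2 = 4 * l ^ 2)
    (ha : |a - l| ≤ m) (hb : |b| ≤ m) (hc : |c - l| ≤ m) :
    |landenB a b c| ≤ 13 * m ^ 3 / (4 * l ^ 2) := by
  have hN := abs_landenB_numerator_le ha hc hb
  rw [sub_sub_sub_cancel_right] at hN
  exact abs_div_landenDenom_le hl hdisc hN

end LandenError

theorem landen_cubic_convergence_general (a b c : ℝ) (hD : 0 < 4 * a * c - b ^ 2)
    (A B C : ℕ → ℝ) (hA0 : A 0 = a) (hB0 : B 0 = b) (hC0 : C 0 = c)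
    (hA : ∀ n, A (n + 1) = A n * ((A n + 3 * C n) ^ 2 - 3 * B n ^ 2) /
      ((3 * A n + C n) * (A n + 3 * C n) - B n ^ 2))
    (hB : ∀ n, B (n + 1) = B n * (3 * (A n - C n) ^ 2 - B n ^ 2) /
      ((3 * A n + C n) * (A n + 3 * C n) - B n ^ 2))
    (hC : ∀ n, C (n + 1) = C n * ((3 * A n + C n) ^ 2 - 3 * B n ^ 2) /
      ((3 * A n + C n) * (A n + 3 * C n) - B n ^ 2))
    (e : ℕ → EuclideanSpace ℝ (Fin 3))
    (he : ∀ n, e n = ![A n - (1 / 2) * Real.sqrt (4 * a * c - b ^ 2), B n,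
      C n - (1 / 2) * Real.sqrt (4 * a * c - b ^ 2)]) :
    ∃ K > 0, ∀ n, ‖e (n + 1)‖ ≤ K * ‖e n‖ ^ 3 := by
  set l := (1 / 2) * √(4 * a * c - b ^ 2) with hl_def
  have hl : 0 < l := mul_pos one_half_pos (Real.sqrt_pos.mpr hD)
  have hA' : ∀ n, A (n + 1) = landenA (A n) (B n) (C n) := hA
  have hB' : ∀ n, B (n + 1) = landenB (A n) (B n) (C n) := hB
  have hC' : ∀ n, C (n + 1) = landenC (A n) (B n) (C n) := hC
  have hdisc : ∀ n, 4 * A n * C n - B n ^ 2 = 4 * l ^ 2 := by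
    intro n
    induction n with
    | zero => rw [hA0, hB0, hC0, hl_def, mul_pow, sq_sqrt hD.le]; ring
    | succ n ih => rw [hA' n, hB' n, hC' n, landen_discr (landenDenom_pos hl ih).ne', ih]
  refine ⟨27 / (4 * l ^ 2), by positivity, fun n => ?_⟩
  obtain ⟨ha, hb, hc⟩ := abs_coords_le_norm (he n)
  calc ‖e (n + 1)‖ ≤ |A (n + 1) - l| + |B (n + 1)| + |C (n + 1) - l| :=
        norm_le_abs_add_abs_add_abs (he (n + 1))
    _ ≤ 7 * ‖e n‖ ^ 3 / (4 * l ^ 2) + 13 * ‖e n‖ ^ 3 / (4 * l ^ 2)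
          + 7 * ‖e n‖ ^ 3 / (4 * l ^ 2) := by
        rw [hA' n, hB' n, hC' n]
        gcongr
        exacts [abs_landenA_sub_le hl (hdisc n) ha hb hc, abs_landenB_le hl (hdisc n) ha hb hc,
          abs_landenC_sub_le hl (hdisc n) ha hb hc]
    _ = 27 / (4 * l ^ 2) * ‖e n‖ ^ 3 := by ring

theorem landen_cubic_convergence (a b c : ℝ) (ha : 0 < a) (hD : 0 < 4 * a * c - b ^ 2)
    (A B C : ℕ → ℝ) (hA0 : A 0 = a) (hB0 : B 0 = b) (hC0 : C 0 = c)
    (hA : ∀ n, A (n + 1) = A n * ((A n + 3 * C n) ^ 2 - 3 * B n ^ 2) /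
      ((3 * A n + C n) * (A n + 3 * C n) - B n ^ 2))
    (hB : ∀ n, B (n + 1) = B n * (3 * (A n - C n) ^ 2 - B n ^ 2) /
      ((3 * A n + C n) * (A n + 3 * C n) - B n ^ 2))
    (hC : ∀ n, C (n + 1) = C n * ((3 * A n + C n) ^ 2 - 3 * B n ^ 2) /
      ((3 * A n + C n) * (A n + 3 * C n) - B n ^ 2))
    (e : ℕ → EuclideanSpace ℝ (Fin 3))
    (he : ∀ n, e n = ![A n - (1 / 2) * Real.sqrt (4 * a * c - b ^ 2), B n,
      C n - (1 / 2) * Real.sqrt (4 * a * c - b ^ 2)]) :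
    ∃ K > 0, ∀ n, ‖e (n + 1)‖ ≤ K * ‖e n‖ ^ 3 :=
  landen_cubic_convergence_general a b c hD A B C hA0 hB0 hC0 hA hB hC e he
end

section
/- Let a, b, c be real numbers and define U(x) = x³ − 3x, V(x) = 3x² − 1, e₀ = a((a+3c)² − 3b²), e₁ = b(3(a−c)² − b²), e₂ = c((3a+c)² − 3b²), z₀ = (a+3c)² − 3b², z₁ = 8b(a−3c), z₂ = −6a² + 10b² + 44ac − 6c², z₃ = 8b(c−3a), z₄ = (3a+c)² − 3b². Then for every real x, (ax² + bx + c)(z₀x⁴ + z₁x³ + z₂x² + z₃x + z₄) = e₀U(x)² + e₁U(x)V(x) + e₂V(x)². -/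
theorem landen_scaling_identity (a b c : ℝ)
    (U V : ℝ → ℝ) (hU : ∀ x, U x = x ^ 3 - 3 * x) (hV : ∀ x, V x = 3 * x ^ 2 - 1)
    (e₀ e₁ e₂ z₀ z₁ z₂ z₃ z₄ : ℝ)
    (he₀ : e₀ = a * ((a + 3 * c) ^ 2 - 3 * b ^ 2))
    (he₁ : e₁ = b * (3 * (a - c) ^ 2 - b ^ 2))
    (he₂ : e₂ = c * ((3 * a + c) ^ 2 - 3 * b ^ 2))
    (hz₀ : z₀ = (a + 3 * c) ^ 2 - 3 * b ^ 2)
    (hz₁ : z₁ = 8 * b * (a - 3 * c))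
    (hz₂ : z₂ = -6 * a ^ 2 + 10 * b ^ 2 + 44 * a * c - 6 * c ^ 2)
    (hz₃ : z₃ = 8 * b * (c - 3 * a))
    (hz₄ : z₄ = (3 * a + c) ^ 2 - 3 * b ^ 2) :
    ∀ x : ℝ, (a * x ^ 2 + b * x + c) *
      (z₀ * x ^ 4 + z₁ * x ^ 3 + z₂ * x ^ 2 + z₃ * x + z₄) =
      e₀ * U x ^ 2 + e₁ * U x * V x + e₂ * V x ^ 2 := by
  intro x; subst he₀ he₁ he₂ hz₀ hz₁ hz₂ hz₃ hz₄; rw [hU, hV]; ring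
end

section
/- Let e₀, e₁, e₂ be real numbers with e₀ > 0, e₂ > 0 and e₁² < 4e₀e₂, and let k be an even positive integer not divisible by 3. Then the integral from −π/2 to π/2 of sin(kθ)/(e₀ sin²(3θ) + e₁ sin(3θ)cos(3θ) + e₂ cos²(3θ)) dθ equals 0. -/
open Real

theorem sin_integral_vanishes (e₀ e₁ e₂ : ℝ) (he₀ : 0 < e₀) (he₂ : 0 < e₂)
    (he₁ : e₁ ^ 2 < 4 * e₀ * e₂) (k : ℕ) (hk : 0 < k) (hke : Even k) (hk3 : ¬ (3 ∣ k)) :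
    ∫ θ in (-(π / 2))..(π / 2), Real.sin (k * θ) /
      (e₀ * Real.sin (3 * θ) ^ 2 + e₁ * Real.sin (3 * θ) * Real.cos (3 * θ) +
        e₂ * Real.cos (3 * θ) ^ 2) = 0 := by
  set D : ℝ → ℝ := fun θ => e₀ * Real.sin (3 * θ) ^ 2 + e₁ * Real.sin (3 * θ) * Real.cos (3 * θ) +
      e₂ * Real.cos (3 * θ) ^ 2 with hDdef
  have hD : ∀ θ, 0 < D θ := by
    intro θ
    have hsc := Real.sin_sq_add_cos_sq (3 * θ)
    simp only [hDdef]
    nlinarith [sq_nonneg (2 * e₀ * Real.sin (3 * θ) + e₁ * Real.cos (3 * θ)),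
      sq_nonneg (2 * e₂ * Real.cos (3 * θ) + e₁ * Real.sin (3 * θ)),
      sq_nonneg (Real.sin (3 * θ)), sq_nonneg (Real.cos (3 * θ)), mul_pos he₀ he₂]
  have hcontD : Continuous D := by
    simp only [hDdef]; fun_prop
  have hint : ∀ (g : ℝ → ℝ), Continuous g → ∀ a b : ℝ,
      IntervalIntegrable (fun θ => g θ / D θ) MeasureTheory.volume a b := by
    intro g hg a b
    exact (hg.div hcontD fun θ => (hD θ).ne').intervalIntegrable a b
  -- periodicity of D with period π/3
  have hDshift : ∀ θ, D (θ + π / 3) = D θ := by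
    intro θ
    have h3 : 3 * (θ + π / 3) = 3 * θ + π := by ring
    simp only [hDdef, h3, Real.sin_add_pi, Real.cos_add_pi]
    ring
  set f : ℝ → ℝ := fun θ => Real.sin (k * θ) / D θ with hfdef
  set g : ℝ → ℝ := fun θ => Real.cos (k * θ) / D θ with hgdef
  -- f has period π
  obtain ⟨m, hm⟩ := hke
  have hsin_per : ∀ x : ℝ, Real.sin (x + (k : ℝ) * π) = Real.sin x := by
    intro x
    have : x + (k : ℝ) * π = x + (m : ℝ) * (2 * π) := by
      rw [hm]; push_cast; ring
    rw [this, Real.sin_add_nat_mul_two_pi]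
  have hcos_per : ∀ x : ℝ, Real.cos (x + (k : ℝ) * π) = Real.cos x := by
    intro x
    have : x + (k : ℝ) * π = x + (m : ℝ) * (2 * π) := by
      rw [hm]; push_cast; ring
    rw [this, Real.cos_add_nat_mul_two_pi]
  have hDper : ∀ θ, D (θ + π) = D θ := by
    intro θ
    have h3 : 3 * (θ + π) = (3 * θ + π) + 2 * π := by ring
    simp only [hDdef, h3, Real.sin_add_two_pi, Real.cos_add_two_pi,
      Real.sin_add_pi, Real.cos_add_pi]
    ring
  have hfper : Function.Periodic f π := by
    intro θ
    simp only [hfdef, hDper]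
    have : (k : ℝ) * (θ + π) = (k : ℝ) * θ + (k : ℝ) * π := by ring
    rw [this, hsin_per]
  -- shift invariance of the integral
  have hshift : ∀ s : ℝ, (∫ θ in (-(π / 2))..(π / 2), f θ)
      = ∫ θ in (-(π / 2))..(π / 2), f (θ + s) := by
    intro s
    rw [intervalIntegral.integral_comp_add_right f s]
    have h := hfper.intervalIntegral_add_eq (-(π / 2)) (-(π / 2) + s)
    rw [show -(π / 2) + π = π / 2 by ring, show -(π / 2) + s + π = π / 2 + s by ring] at h
    exact h
  -- key trig values
  have hc : Real.cos ((k : ℝ) * (π / 3)) = -(1 / 2) := by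
    have h6 : k % 6 = 2 ∨ k % 6 = 4 := by omega
    have hc23 : Real.cos (2 * π / 3) = -(1 / 2) := by
      rw [show (2 : ℝ) * π / 3 = π - π / 3 by ring, Real.cos_pi_sub, Real.cos_pi_div_three]
    have hc43 : Real.cos (4 * π / 3) = -(1 / 2) := by
      rw [show (4 : ℝ) * π / 3 = π / 3 + π by ring, Real.cos_add_pi, Real.cos_pi_div_three]
    rcases h6 with h | h
    · obtain ⟨n, hn⟩ : ∃ n, k = 6 * n + 2 := ⟨k / 6, by omega⟩
      have : (k : ℝ) * (π / 3) = 2 * π / 3 + (n : ℝ) * (2 * π) := by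
        rw [hn]; push_cast; ring
      rw [this, Real.cos_add_nat_mul_two_pi, hc23]
    · obtain ⟨n, hn⟩ : ∃ n, k = 6 * n + 4 := ⟨k / 6, by omega⟩
      have : (k : ℝ) * (π / 3) = 4 * π / 3 + (n : ℝ) * (2 * π) := by
        rw [hn]; push_cast; ring
      rw [this, Real.cos_add_nat_mul_two_pi, hc43]
  set s₁ : ℝ := Real.sin ((k : ℝ) * (π / 3)) with hs₁
  set I : ℝ := ∫ θ in (-(π / 2))..(π / 2), f θ with hI
  set J : ℝ := ∫ θ in (-(π / 2))..(π / 2), g θ with hJ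
  -- general expansion lemma for a shift by t with D (θ + t) = D θ
  have expand : ∀ t : ℝ, (∀ θ, D (θ + t) = D θ) →
      (∫ θ in (-(π / 2))..(π / 2), f (θ + t))
        = Real.cos ((k : ℝ) * t) * I + Real.sin ((k : ℝ) * t) * J := by
    intro t ht
    have hpt : ∀ θ, f (θ + t) = Real.cos ((k : ℝ) * t) * (Real.sin ((k : ℝ) * θ) / D θ)
        + Real.sin ((k : ℝ) * t) * (Real.cos ((k : ℝ) * θ) / D θ) := by
      intro θ
      simp only [hfdef, ht]
      rw [show (k : ℝ) * (θ + t) = (k : ℝ) * θ + (k : ℝ) * t by ring, Real.sin_add]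
      ring
    rw [intervalIntegral.integral_congr (g := fun θ =>
      Real.cos ((k : ℝ) * t) * (Real.sin ((k : ℝ) * θ) / D θ)
        + Real.sin ((k : ℝ) * t) * (Real.cos ((k : ℝ) * θ) / D θ)) (fun θ _ => hpt θ)]
    rw [intervalIntegral.integral_add
      (((hint _ (by fun_prop) _ _)).const_mul _) (((hint _ (by fun_prop) _ _)).const_mul _),
      intervalIntegral.integral_const_mul, intervalIntegral.integral_const_mul]
  have eq1 : I = -(1 / 2) * I + s₁ * J := by
    have := hshift (π / 3)
    rw [expand (π / 3) hDshift] at this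
    rw [hc] at this
    exact this
  have hD2shift : ∀ θ, D (θ + 2 * (π / 3)) = D θ := by
    intro θ
    have : θ + 2 * (π / 3) = (θ + π / 3) + π / 3 := by ring
    rw [this, hDshift, hDshift]
  have eq2 : I = -(1 / 2) * I - s₁ * J := by
    have h := hshift (2 * (π / 3))
    rw [expand (2 * (π / 3)) hD2shift] at h
    rw [show (k : ℝ) * (2 * (π / 3)) = 2 * ((k : ℝ) * (π / 3)) by ring,
      Real.cos_two_mul, Real.sin_two_mul, hc] at h
    rw [hs₁]
    linear_combination h
  have : I = 0 := by linarith
  exact this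
end

section
/- Let e₀, e₁, e₂ be real numbers with e₀ > 0, e₂ > 0 and e₁² < 4e₀e₂, and let k be an even positive integer not divisible by 3. Then the integral from −π/2 to π/2 of cos(kθ)/(e₀ sin²(3θ) + e₁ sin(3θ)cos(3θ) + e₂ cos²(3θ)) dθ equals 0. -/
/-!
Write the integrand as `cos (k θ) * g θ` with `g` of period `π / 3`; the integrand then has
period `π`, so its integral `I` over a period is invariant under the shifts `θ ↦ θ ± π / 3`.
Since `k` is even and prime to `3`, `cos (k π / 3) = -1/2`, hence
`cos (k (θ + π / 3)) + cos (k (θ - π / 3)) = -cos (k θ)`. Integrating gives `2 I = -I`.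
-/

open Real Function MeasureTheory intervalIntegral

theorem cos_nat_mul_pi_div_three_of_even {k : ℕ} (hke : Even k) (hk3 : ¬ 3 ∣ k) :
    cos (k * (π / 3)) = -(1 / 2) := by
  obtain ⟨m, rfl | rfl⟩ : ∃ m, k = 6 * m + 2 ∨ k = 6 * m + 4 := by
    obtain ⟨n, hn⟩ := hke
    exact ⟨k / 6, by omega⟩
  · have : ((6 * m + 2 : ℕ) : ℝ) * (π / 3) = (π - π / 3) + m * (2 * π) := by push_cast; ring
    rw [this, cos_add_nat_mul_two_pi, cos_pi_sub, cos_pi_div_three]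
  · have : ((6 * m + 4 : ℕ) : ℝ) * (π / 3) = (π / 3 + π) + m * (2 * π) := by push_cast; ring
    rw [this, cos_add_nat_mul_two_pi, cos_add_pi, cos_pi_div_three]

theorem cos_nat_mul_add_pi_div_three_add_cos_nat_mul_sub_pi_div_three {k : ℕ} (hke : Even k)
    (hk3 : ¬ 3 ∣ k) (θ : ℝ) :
    cos (k * (θ + π / 3)) + cos (k * (θ - π / 3)) = -cos (k * θ) := by
  rw [mul_add, mul_sub, cos_add, cos_sub, cos_nat_mul_pi_div_three_of_even hke hk3]
  ring

theorem periodic_cos_nat_mul_of_even {k : ℕ} (hke : Even k) :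
    Periodic (fun θ => cos (k * θ)) π := by
  obtain ⟨m, rfl⟩ := hke
  intro θ
  have : ((m + m : ℕ) : ℝ) * (θ + π) = (m + m : ℕ) * θ + m * (2 * π) := by push_cast; ring
  simp only [this, cos_add_nat_mul_two_pi]

theorem integral_cos_nat_mul_mul_eq_zero {g : ℝ → ℝ} (hg : Periodic g (π / 3))
    (hg_int : IntervalIntegrable g volume 0 (π / 3)) {k : ℕ} (hke : Even k) (hk3 : ¬ 3 ∣ k)
    (a : ℝ) : ∫ θ in a..a + π, cos (k * θ) * g θ = 0 := by
  set f : ℝ → ℝ := fun θ => cos (k * θ) * g θ with hf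
  have hf_per : Periodic f π := by
    have hg_pi := hg.nat_mul 3
    rw [show ((3 : ℕ) : ℝ) * (π / 3) = π by push_cast; ring] at hg_pi
    exact (periodic_cos_nat_mul_of_even hke).mul hg_pi
  have hf_int (c : ℝ) : IntervalIntegrable (fun θ => f (θ + c)) volume a (a + π) := by
    have hg_int' := hg.intervalIntegrable (by positivity) (by rwa [zero_add]) (a + c) (a + π + c)
    have hcos : Continuous fun θ : ℝ => cos (k * θ) := by fun_prop
    simpa using (hg_int'.continuousOn_mul hcos.continuousOn).comp_add_right c
  have hf_shift (c : ℝ) : ∫ θ in a..a + π, f (θ + c) = ∫ θ in a..a + π, f θ := by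
    rw [integral_comp_add_right, add_right_comm, hf_per.intervalIntegral_add_eq]
  have hf_sum (θ : ℝ) : f (θ + π / 3) + f (θ + -(π / 3)) = -f θ := by
    simp only [hf, ← sub_eq_add_neg, hg θ, hg.sub_eq θ, ← add_mul,
      cos_nat_mul_add_pi_div_three_add_cos_nat_mul_sub_pi_div_three hke hk3, neg_mul]
  have h := integral_add (hf_int (π / 3)) (hf_int (-(π / 3)))
  simp only [hf_sum, intervalIntegral.integral_neg, hf_shift] at h
  linarith

theorem mul_sin_sq_add_mul_sin_mul_cos_add_mul_cos_sq_pos {e₀ e₁ e₂ : ℝ} (he₀ : 0 < e₀)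
    (he₂ : 0 < e₂) (he₁ : e₁ ^ 2 < 4 * e₀ * e₂) (x : ℝ) :
    0 < e₀ * sin x ^ 2 + e₁ * sin x * cos x + e₂ * cos x ^ 2 := by
  nlinarith [sin_sq_add_cos_sq x, sq_nonneg (2 * e₀ * sin x + e₁ * cos x),
    sq_nonneg (2 * e₂ * cos x + e₁ * sin x)]

theorem periodic_mul_sin_sq_add_mul_sin_mul_cos_add_mul_cos_sq (e₀ e₁ e₂ : ℝ) :
    Periodic (fun x => e₀ * sin x ^ 2 + e₁ * sin x * cos x + e₂ * cos x ^ 2) π := by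
  intro x
  simp only [sin_add_pi, cos_add_pi]
  ring

theorem cos_integral_vanishes_general (e₀ e₁ e₂ : ℝ) (he₀ : 0 < e₀) (he₂ : 0 < e₂)
    (he₁ : e₁ ^ 2 < 4 * e₀ * e₂) (k : ℕ) (hke : Even k) (hk3 : ¬ (3 ∣ k)) :
    ∫ θ in (-(π / 2))..(π / 2), Real.cos (k * θ) /
      (e₀ * Real.sin (3 * θ) ^ 2 + e₁ * Real.sin (3 * θ) * Real.cos (3 * θ) +
        e₂ * Real.cos (3 * θ) ^ 2) = 0 := by
  set g : ℝ → ℝ := fun θ => (e₀ * sin (3 * θ) ^ 2 + e₁ * sin (3 * θ) * cos (3 * θ) +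
    e₂ * cos (3 * θ) ^ 2)⁻¹
  have hg_per : Periodic g (π / 3) := by
    have := ((periodic_mul_sin_sq_add_mul_sin_mul_cos_add_mul_cos_sq e₀ e₁ e₂).const_mul 3).comp
      Inv.inv
    rwa [inv_mul_eq_div] at this
  have hg_cont : Continuous g := (by fun_prop : Continuous fun θ => _).inv₀ fun θ =>
    (mul_sin_sq_add_mul_sin_mul_cos_add_mul_cos_sq_pos he₀ he₂ he₁ (3 * θ)).ne'
  have h := integral_cos_nat_mul_mul_eq_zero hg_per (hg_cont.intervalIntegrable _ _) hke hk3
    (-(π / 2))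
  rwa [show -(π / 2) + π = π / 2 by ring] at h

theorem cos_integral_vanishes (e₀ e₁ e₂ : ℝ) (he₀ : 0 < e₀) (he₂ : 0 < e₂)
    (he₁ : e₁ ^ 2 < 4 * e₀ * e₂) (k : ℕ) (hk : 0 < k) (hke : Even k) (hk3 : ¬ (3 ∣ k)) :
    ∫ θ in (-(π / 2))..(π / 2), Real.cos (k * θ) /
      (e₀ * Real.sin (3 * θ) ^ 2 + e₁ * Real.sin (3 * θ) * Real.cos (3 * θ) +
        e₂ * Real.cos (3 * θ) ^ 2) = 0 :=
  cos_integral_vanishes_general e₀ e₁ e₂ he₀ he₂ he₁ k hke hk3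
end

section
/- Let w > 0 and let x₀ ≥ w be real. Define x_{n+1} = xₙ(xₙ² + 3w²)/(3xₙ² + w²). Then xₙ ≥ w for all n and xₙ → w as n → ∞; moreover there is a constant C > 0 such that |x_{n+1} − w| ≤ C|xₙ − w|³ for all n. -/
/-!
The identity `f(x) - w = (x - w)³ / (3x² + w²)` for the map `f(x) = x(x² + 3w²)/(3x² + w²)`
drives the whole argument: it keeps `x - w ≥ 0`, the denominator is at least `4w²` once `x ≥ w`, which
gives the cubic bound, and `(x - w)² ≤ x² + w²/3` shows `f(x) - w ≤ (x - w)/3`, so the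
iterates converge to `w` at least geometrically.
-/

open Filter Topology

noncomputable def landenMap (w x : ℝ) : ℝ :=
  x * (x ^ 2 + 3 * w ^ 2) / (3 * x ^ 2 + w ^ 2)

section

variable {w x : ℝ}

lemma landenMap_sub (hw : w ≠ 0) :
    landenMap w x - w = (x - w) ^ 3 / (3 * x ^ 2 + w ^ 2) := by
  have hden : 3 * x ^ 2 + w ^ 2 ≠ 0 := by positivity
  rw [landenMap, div_sub' hden, div_eq_div_iff hden hden]
  ring

lemma le_landenMap (hw : w ≠ 0) (hx : w ≤ x) : w ≤ landenMap w x := by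
  have : 0 ≤ landenMap w x - w := by
    rw [landenMap_sub hw]
    have := sub_nonneg.2 hx
    positivity
  linarith

lemma landenMap_sub_le_third (hw : 0 < w) (hx : w ≤ x) :
    landenMap w x - w ≤ 1 / 3 * (x - w) := by
  have hd := sub_nonneg.2 hx
  rw [landenMap_sub hw.ne', div_le_iff₀ (by positivity)]
  nlinarith [mul_nonneg hd (sq_nonneg w), mul_nonneg (mul_nonneg hd hd) (mul_nonneg hd hw.le),
    mul_nonneg hd (mul_nonneg hd hw.le)]

lemma landenMap_sub_le_cube (hw : 0 < w) (hx : w ≤ x) :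
    landenMap w x - w ≤ (4 * w ^ 2)⁻¹ * (x - w) ^ 3 := by
  have hden : 4 * w ^ 2 ≤ 3 * x ^ 2 + w ^ 2 := by nlinarith
  rw [landenMap_sub hw.ne', ← div_eq_inv_mul]
  exact div_le_div_of_nonneg_left (pow_nonneg (sub_nonneg.2 hx) 3) (by positivity) hden

end

theorem one_variable_landen (w : ℝ) (hw : 0 < w) (x : ℕ → ℝ) (hx0 : w ≤ x 0)
    (hx : ∀ n, x (n + 1) = x n * (x n ^ 2 + 3 * w ^ 2) / (3 * x n ^ 2 + w ^ 2)) :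
    (∀ n, w ≤ x n) ∧ Tendsto x atTop (nhds w) ∧
      ∃ C > 0, ∀ n, |x (n + 1) - w| ≤ C * |x n - w| ^ 3 := by
  have hstep : ∀ n, x (n + 1) = landenMap w (x n) := hx
  have hge : ∀ n, w ≤ x n := fun n => by
    induction n with
    | zero => exact hx0
    | succ n ih => exact hstep n ▸ le_landenMap hw.ne' ih
  have hgeom : ∀ n, x n - w ≤ (1 / 3) ^ n * (x 0 - w) := fun n =>
    le_geom (u := fun n => x n - w) (by norm_num) n fun k _ =>
      hstep k ▸ landenMap_sub_le_third hw (hge k)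
  refine ⟨hge, ?_, (4 * w ^ 2)⁻¹, by positivity, fun n => ?_⟩
  · have hpow := (tendsto_pow_atTop_nhds_zero_of_lt_one (r := (1 / 3 : ℝ)) (by norm_num)
      (by norm_num)).mul_const (x 0 - w)
    rw [zero_mul] at hpow
    have hsub : Tendsto (fun n => x n - w) atTop (𝓝 0) :=
      squeeze_zero (fun n => sub_nonneg.2 (hge n)) hgeom hpow
    simpa using hsub.add_const w
  · rw [abs_of_nonneg (sub_nonneg.2 (hge _)), abs_of_nonneg (sub_nonneg.2 (hge n)), hstep]
    exact landenMap_sub_le_cube hw (hge n)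
end

section
/- Let w > 0 and t > 0, and define the sequence xₙ by x₀ = w·coth(t) and x_{n+1} = xₙ(xₙ² + 3w²)/(3xₙ² + w²). Then xₙ = w·coth(3ⁿ t) for every n ≥ 0. -/
/-!
The recursion is the triple-angle formula for the hyperbolic cotangent in disguise: writing
`c = coth s`, the identities `cosh 3s = cosh s (cosh² s + 3 sinh² s)` and
`sinh 3s = sinh s (3 cosh² s + sinh² s)` give `coth 3s = c (c² + 3) / (3c² + 1)`, and the map
`x ↦ x (x² + 3w²) / (3x² + w²)` is homogeneous of degree one in `(x, w)`. Induction on `n`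
then turns `x₀ = w coth t` into `xₙ = w coth (3ⁿ t)`.
-/

open Real

noncomputable def landenStep (w x : ℝ) : ℝ := x * (x ^ 2 + 3 * w ^ 2) / (3 * x ^ 2 + w ^ 2)

theorem landenStep_mul (w c : ℝ) : landenStep w (w * c) = w * landenStep 1 c := by
  rcases eq_or_ne w 0 with rfl | hw
  · simp [landenStep]
  have hden : 3 * c ^ 2 + 1 ≠ 0 := by positivity
  unfold landenStep
  field_simp

/-- At `s = 0` both sides are the junk value `0`. -/
theorem coth_three_mul (s : ℝ) :
    cosh (3 * s) / sinh (3 * s) = landenStep 1 (cosh s / sinh s) := by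
  rcases eq_or_ne (sinh s) 0 with hs | hs
  · obtain rfl : s = 0 := sinh_eq_zero.mp hs
    simp [landenStep]
  have hcosh : cosh (3 * s) = cosh s * (cosh s ^ 2 + 3 * sinh s ^ 2) := by
    rw [cosh_three_mul]; linear_combination (3 * cosh s) * cosh_sq' s
  have hsinh : sinh (3 * s) = sinh s * (3 * cosh s ^ 2 + sinh s ^ 2) := by
    rw [sinh_three_mul]; linear_combination (-3 * sinh s) * cosh_sq' s
  rw [hcosh, hsinh, landenStep]
  field_simp

theorem landen_coth_closed_form_general (w t : ℝ) (x : ℕ → ℝ)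
    (hx0 : x 0 = w * (Real.cosh t / Real.sinh t))
    (hx : ∀ n, x (n + 1) = x n * (x n ^ 2 + 3 * w ^ 2) / (3 * x n ^ 2 + w ^ 2)) :
    ∀ n : ℕ, x n = w * (Real.cosh (3 ^ n * t) / Real.sinh (3 ^ n * t)) := by
  intro n
  induction n with
  | zero => simpa using hx0
  | succ n ih =>
    have hpow : (3 : ℝ) ^ (n + 1) * t = 3 * (3 ^ n * t) := by ring
    rw [hx n, ih, hpow, coth_three_mul, ← landenStep_mul, landenStep]

theorem landen_coth_closed_form (w t : ℝ) (hw : 0 < w) (ht : 0 < t) (x : ℕ → ℝ)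
    (hx0 : x 0 = w * (Real.cosh t / Real.sinh t))
    (hx : ∀ n, x (n + 1) = x n * (x n ^ 2 + 3 * w ^ 2) / (3 * x n ^ 2 + w ^ 2)) :
    ∀ n : ℕ, x n = w * (Real.cosh (3 ^ n * t) / Real.sinh (3 ^ n * t)) :=
  landen_coth_closed_form_general w t x hx0 hx
end

section
/- Let 0 < b < a be real numbers. Then G(a, b) = G((a+b)/2, √(ab)), where G(a,b) denotes the integral from 0 to π/2 of 1/√(a² cos²θ + b² sin²θ) dθ. (Gauss's invariance of the elliptic integral under the arithmetic-geometric mean step.) -/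
/-!
The substitution `x = b tan θ` turns `G(a, b)` into `∫₀^∞ dx / √((x² + a²)(x² + b²))`.
In this form the AGM step is the substitution `u = (x - ab/x)/2`, a bijection from `(0, ∞)`
onto `ℝ`. Since `u² + ((a+b)/2)² = (x² + a²)(x² + b²)/(4x²)` and `u² + ab = ((x² + ab)/(2x))²`,
the integral over `ℝ` of the new integrand becomes twice the old integral over `(0, ∞)`,
while by evenness it is also twice the new integral over `(0, ∞)`.
-/

open Real MeasureTheory Set

lemma image_const_mul_tan_Ioo {q : ℝ} (hq : 0 < q) :
    (fun θ => q * tan θ) '' Ioo 0 (π / 2) = Ioi 0 := by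
  ext y
  simp only [mem_image, mem_Ioo, mem_Ioi]
  constructor
  · rintro ⟨θ, ⟨hθ₀, hθ₁⟩, rfl⟩
    exact mul_pos hq (tan_pos_of_pos_of_lt_pi_div_two hθ₀ hθ₁)
  · intro hy
    refine ⟨arctan (y / q), ⟨arctan_pos.2 (div_pos hy hq), arctan_lt_pi_div_two _⟩, ?_⟩
    rw [tan_arctan]
    field_simp

lemma abs_deriv_smul_integrand_const_mul_tan (p : ℝ) {q θ : ℝ} (hq : 0 < q) (hθ : 0 < cos θ) :
    |q * (1 / cos θ ^ 2)| •
        (1 / √(((q * tan θ) ^ 2 + p ^ 2) * ((q * tan θ) ^ 2 + q ^ 2))) =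
      1 / √(p ^ 2 * cos θ ^ 2 + q ^ 2 * sin θ ^ 2) := by
  have hfactor : ((q * tan θ) ^ 2 + p ^ 2) * ((q * tan θ) ^ 2 + q ^ 2) =
      (q * (1 / cos θ ^ 2)) ^ 2 * (p ^ 2 * cos θ ^ 2 + q ^ 2 * sin θ ^ 2) := by
    rw [tan_eq_sin_div_cos]
    field_simp
    linear_combination (q ^ 2 * sin θ ^ 2 + p ^ 2 * cos θ ^ 2) * sin_sq_add_cos_sq θ
  have hderiv : 0 < q * (1 / cos θ ^ 2) := by positivity
  rw [hfactor, sqrt_mul (sq_nonneg _), sqrt_sq hderiv.le, abs_of_pos hderiv, smul_eq_mul,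
    mul_one_div, div_mul_cancel_left₀ hderiv.ne', one_div]

theorem integral_cos_sin_eq_integral_Ioi (p : ℝ) {q : ℝ} (hq : 0 < q) :
    ∫ θ in (0 : ℝ)..(π / 2), 1 / √(p ^ 2 * cos θ ^ 2 + q ^ 2 * sin θ ^ 2) =
      ∫ x in Ioi 0, 1 / √((x ^ 2 + p ^ 2) * (x ^ 2 + q ^ 2)) := by
  have hsub : Ioo 0 (π / 2) ⊆ Ioo (-(π / 2)) (π / 2) :=
    Ioo_subset_Ioo_left (by linarith [pi_pos])
  have hcos : ∀ θ ∈ Ioo 0 (π / 2), 0 < cos θ := fun θ hθ => cos_pos_of_mem_Ioo (hsub hθ)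
  have hderiv : ∀ θ ∈ Ioo 0 (π / 2), HasDerivWithinAt (fun θ => q * tan θ)
      (q * (1 / cos θ ^ 2)) (Ioo 0 (π / 2)) θ := fun θ hθ =>
    ((hasDerivAt_tan (hcos θ hθ).ne').const_mul q).hasDerivWithinAt
  have hinj : InjOn (fun θ => q * tan θ) (Ioo 0 (π / 2)) :=
    ((strictMono_mul_left_of_pos hq).comp_strictMonoOn (strictMonoOn_tan.mono hsub)).injOn
  rw [intervalIntegral.integral_of_le (by positivity), ← Measure.restrict_congr_set Ioo_ae_eq_Ioc,
    ← image_const_mul_tan_Ioo hq,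
    integral_image_eq_integral_abs_deriv_smul measurableSet_Ioo hderiv hinj]
  exact setIntegral_congr_fun measurableSet_Ioo fun θ hθ =>
    (abs_deriv_smul_integrand_const_mul_tan p hq (hcos θ hθ)).symm

lemma hasDerivAt_half_sub_div (c : ℝ) {x : ℝ} (hx : x ≠ 0) :
    HasDerivAt (fun x => (x - c / x) / 2) ((1 + c / x ^ 2) / 2) x := by
  have h := ((hasDerivAt_id' x).sub ((hasDerivAt_const x c).div (hasDerivAt_id' x) hx)).div_const 2
  exact h.congr_deriv (by ring)

section HalfSubDiv

variable {c : ℝ}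

lemma strictMonoOn_half_sub_div (hc : 0 ≤ c) : StrictMonoOn (fun x => (x - c / x) / 2) (Ioi 0) := by
  intro x hx y _ hxy
  have : c / y ≤ c / x := div_le_div_of_nonneg_left hc hx hxy.le
  dsimp only
  linarith

lemma image_half_sub_div_Ioi (hc : 0 < c) : (fun x => (x - c / x) / 2) '' Ioi 0 = univ := by
  refine eq_univ_of_forall fun u => ?_
  have habs : |u| < √(u ^ 2 + c) := by
    rw [← sqrt_sq_eq_abs]
    exact sqrt_lt_sqrt (sq_nonneg u) (by linarith)
  have hpos : 0 < u + √(u ^ 2 + c) := by linarith [neg_abs_le u]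
  have hsq : √(u ^ 2 + c) ^ 2 = u ^ 2 + c := sq_sqrt (by positivity)
  refine ⟨u + √(u ^ 2 + c), hpos, ?_⟩
  field_simp
  linear_combination hsq

theorem integral_eq_setIntegral_Ioi_half_sub_div {E : Type*} [NormedAddCommGroup E]
    [NormedSpace ℝ E] (hc : 0 < c) (g : ℝ → E) :
    ∫ u, g u = ∫ x in Ioi 0, ((1 + c / x ^ 2) / 2) • g ((x - c / x) / 2) := by
  have hsubst := integral_image_eq_integral_abs_deriv_smul measurableSet_Ioi
    (fun x hx => (hasDerivAt_half_sub_div c (ne_of_gt hx)).hasDerivWithinAt)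
    (strictMonoOn_half_sub_div hc.le).injOn g
  rw [image_half_sub_div_Ioi hc, Measure.restrict_univ] at hsubst
  rw [hsubst]
  refine setIntegral_congr_fun measurableSet_Ioi fun x (hx : 0 < x) => ?_
  rw [abs_of_pos (by positivity)]

end HalfSubDiv

lemma agm_step_integrand {a b x : ℝ} (hab : 0 ≤ a * b) (hx : 0 < x) :
    (1 + a * b / x ^ 2) / 2 *
        (1 / √((((x - a * b / x) / 2) ^ 2 + ((a + b) / 2) ^ 2) *
          (((x - a * b / x) / 2) ^ 2 + a * b))) =
      2 * (1 / √((x ^ 2 + a ^ 2) * (x ^ 2 + b ^ 2))) := by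
  have hfactor : (((x - a * b / x) / 2) ^ 2 + ((a + b) / 2) ^ 2) *
      (((x - a * b / x) / 2) ^ 2 + a * b) =
        ((x ^ 2 + a * b) / (4 * x ^ 2)) ^ 2 * ((x ^ 2 + a ^ 2) * (x ^ 2 + b ^ 2)) := by
    field_simp
    ring
  have hne : x ^ 2 + a * b ≠ 0 := by positivity
  rw [hfactor, sqrt_mul (sq_nonneg _), sqrt_sq (by positivity)]
  field_simp
  ring

theorem setIntegral_Ioi_agm_step {a b : ℝ} (hab : 0 < a * b) :
    ∫ x in Ioi 0, 1 / √((x ^ 2 + ((a + b) / 2) ^ 2) * (x ^ 2 + a * b)) =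
      ∫ x in Ioi 0, 1 / √((x ^ 2 + a ^ 2) * (x ^ 2 + b ^ 2)) := by
  set h : ℝ → ℝ := fun u => 1 / √((u ^ 2 + ((a + b) / 2) ^ 2) * (u ^ 2 + a * b))
  have heven : ∫ u, h u = 2 * ∫ u in Ioi 0, h u := by
    simpa only [h, sq_abs] using integral_comp_abs (f := h)
  have hsubst : ∫ u, h u = 2 * ∫ x in Ioi 0, 1 / √((x ^ 2 + a ^ 2) * (x ^ 2 + b ^ 2)) := by
    rw [integral_eq_setIntegral_Ioi_half_sub_div hab, ← integral_const_mul]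
    exact setIntegral_congr_fun measurableSet_Ioi fun x hx =>
      agm_step_integrand hab.le hx
  linarith

theorem gauss_agm_invariance (a b : ℝ) (hb : 0 < b) (hab : b < a) :
    ∫ θ in (0:ℝ)..(π / 2),
        1 / Real.sqrt (a ^ 2 * Real.cos θ ^ 2 + b ^ 2 * Real.sin θ ^ 2) =
      ∫ θ in (0:ℝ)..(π / 2),
        1 / Real.sqrt (((a + b) / 2) ^ 2 * Real.cos θ ^ 2 +
          Real.sqrt (a * b) ^ 2 * Real.sin θ ^ 2) := by
  have hab_pos : 0 < a * b := mul_pos (hb.trans hab) hb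
  rw [integral_cos_sin_eq_integral_Ioi a hb,
    integral_cos_sin_eq_integral_Ioi ((a + b) / 2) (sqrt_pos.2 hab_pos), sq_sqrt hab_pos.le]
  exact (setIntegral_Ioi_agm_step hab_pos).symm
end
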